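/- Let (u, p, d) be a smooth solution of the steady Ericksen–Leslie system on ℝⁿ ∖ {0} with d valued in S^{n−1}. Then the pointwise identity |∇u|² + |Δd + |∇d|² d|² = Δ(|u|²/2) − u·∇(|∇d|²/2 + |u|²/2 + p) holds on ℝⁿ ∖ {0}. -/

import Mathlib

open Real MeasureTheory Metric Filter

noncomputable section

abbrev E (n : ℕ) := EuclideanSpace ℝ (Fin n)

/-- Partial derivative in the `i`-th coordinate direction. -/
def pd {n : ℕ} (f : E n → ℝ) (i : Fin n) (x : E n) : ℝ :=
  fderiv ℝ f x (EuclideanSpace.single i 1)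

/-- Euclidean Laplacian. -/
def lap {n : ℕ} (f : E n → ℝ) (x : E n) : ℝ := ∑ i, pd (pd f i) i x

/-- `|∇d|²` for a vector-valued map. -/
def gradSq {n : ℕ} (d : E n → E n) (x : E n) : ℝ :=
  ∑ i, ∑ k, (pd (fun y => d y k) i x) ^ 2

/-- The radial derivative `∂/∂|x|` of the `k`-th component of `d`. -/
def radDer {n : ℕ} (d : E n → E n) (k : Fin n) (x : E n) : ℝ :=
  fderiv ℝ (fun y => d y k) x (‖x‖⁻¹ • x)

section helpers
variable {n : ℕ} {f g : E n → ℝ} {i j : Fin n} {x : E n}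

lemma pd_congr (h : f =ᶠ[nhds x] g) : pd f i x = pd g i x := by
  unfold pd; rw [h.fderiv_eq]

lemma pd_add (hf : DifferentiableAt ℝ f x) (hg : DifferentiableAt ℝ g x) :
    pd (fun y => f y + g y) i x = pd f i x + pd g i x := by
  unfold pd; rw [fderiv_fun_add hf hg]; simp

lemma pd_mul (hf : DifferentiableAt ℝ f x) (hg : DifferentiableAt ℝ g x) :
    pd (fun y => f y * g y) i x = f x * pd g i x + g x * pd f i x := by
  unfold pd; rw [fderiv_fun_mul hf hg]; simp [smul_eq_mul]

lemma pd_sum {ι : Type*} (t : Finset ι) (A : ι → E n → ℝ)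
    (h : ∀ a ∈ t, DifferentiableAt ℝ (A a) x) :
    pd (fun y => ∑ a ∈ t, A a y) i x = ∑ a ∈ t, pd (A a) i x := by
  unfold pd; rw [fderiv_fun_sum h]; simp

lemma pd_sq_div_two (hf : DifferentiableAt ℝ f x) :
    pd (fun y => f y ^ 2 / 2) i x = f x * pd f i x := by
  have h : (fun y => f y ^ 2 / 2) = fun y => (f y * f y) * (1/2 : ℝ) := by
    funext y; ring
  rw [h]
  unfold pd
  rw [fderiv_mul_const (hf.fun_mul hf), fderiv_fun_mul hf hf]
  simp [smul_eq_mul]; ring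

lemma diff_sq_div_two (hf : DifferentiableAt ℝ f x) :
    DifferentiableAt ℝ (fun y => f y ^ 2 / 2) x := by fun_prop

lemma contDiffOn_pd {s : Set (E n)} (hs : IsOpen s) (hf : ContDiffOn ℝ (⊤ : ℕ∞) f s) (i : Fin n) :
    ContDiffOn ℝ (⊤ : ℕ∞) (pd f i) s :=
  (hf.fderiv_of_isOpen (m := (⊤ : ℕ∞)) hs (by simp)).clm_apply contDiffOn_const

lemma diffAt {s : Set (E n)} (hs : IsOpen s) (hf : ContDiffOn ℝ (⊤ : ℕ∞) f s) (hx : x ∈ s) :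
    DifferentiableAt ℝ f x :=
  (hf.contDiffAt (hs.mem_nhds hx)).differentiableAt (by simp)

lemma contDiffOn_proj {u : E n → E n} {s : Set (E n)} (hu : ContDiffOn ℝ (⊤ : ℕ∞) u s) (k : Fin n) :
    ContDiffOn ℝ (⊤ : ℕ∞) (fun y => u y k) s := by
  have h := ((EuclideanSpace.proj (𝕜 := ℝ) k).contDiff.comp_contDiffOn hu)
  exact h

lemma pd_pd_symm {s : Set (E n)} (hs : IsOpen s) (hf : ContDiffOn ℝ (⊤ : ℕ∞) f s) (hx : x ∈ s) :
    pd (pd f i) j x = pd (pd f j) i x := by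
  have hCA : ContDiffAt ℝ (⊤ : ℕ∞) f x := hf.contDiffAt (hs.mem_nhds hx)
  have hsym := hCA.isSymmSndFDerivAt (by rw [minSmoothness_of_isRCLikeNormedField]; exact WithTop.coe_le_coe.mpr le_top)
  have hd : DifferentiableAt ℝ (fderiv ℝ f) x :=
    (hCA.fderiv_right (m := (⊤ : ℕ∞)) (by simp)).differentiableAt (by simp)
  have h1 : ∀ v w : E n, fderiv ℝ (fun y => fderiv ℝ f y v) x w = fderiv ℝ (fderiv ℝ f) x w v := by
    intro v w
    rw [fderiv_clm_apply hd (differentiableAt_const v)]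
    simp
  show fderiv ℝ (fun y => fderiv ℝ f y (EuclideanSpace.single i 1)) x (EuclideanSpace.single j 1)
     = fderiv ℝ (fun y => fderiv ℝ f y (EuclideanSpace.single j 1)) x (EuclideanSpace.single i 1)
  rw [h1, h1, hsym]

lemma norm_sq_expand (v : E n) : ‖v‖^2 = ∑ k, (v k)^2 := by
  rw [EuclideanSpace.norm_eq, Real.sq_sqrt (by positivity)]
  simp [sq_abs]

lemma normSq_fun (w : E n → E n) : (fun y : E n => ‖w y‖^2/2) = fun y => ∑ k, (w y k)^2/2 := by
  funext y; rw [norm_sq_expand, Finset.sum_div]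

lemma pd_normSq {s : Set (E n)} (hs : IsOpen s) {w : E n → E n}
    (hw : ContDiffOn ℝ (⊤ : ℕ∞) w s) (hx : x ∈ s) (i : Fin n) :
    pd (fun y => ‖w y‖^2/2) i x = ∑ k, w x k * pd (fun z => w z k) i x := by
  have hdk : ∀ k : Fin n, DifferentiableAt ℝ (fun y => (w y k)^2/2) x := fun k =>
    diff_sq_div_two (diffAt hs (contDiffOn_proj hw k) hx)
  rw [normSq_fun]
  rw [pd_sum _ _ (fun k _ => hdk k)]
  exact Finset.sum_congr rfl fun k _ => pd_sq_div_two (diffAt hs (contDiffOn_proj hw k) hx)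

lemma lap_normSq {s : Set (E n)} (hs : IsOpen s) {w : E n → E n}
    (hw : ContDiffOn ℝ (⊤ : ℕ∞) w s) (hx : x ∈ s) :
    lap (fun y => ‖w y‖^2/2) x = gradSq w x + ∑ k, w x k * lap (fun z => w z k) x := by
  unfold lap
  have hcong : ∀ j : Fin n, pd (pd (fun y => ‖w y‖^2/2) j) j x
      = pd (fun y => ∑ k, w y k * pd (fun z => w z k) j y) j x := by
    intro j
    apply pd_congr
    filter_upwards [hs.mem_nhds hx] with y hy
    exact pd_normSq hs hw hy j
  have hterm : ∀ j : Fin n, pd (fun y => ∑ k, w y k * pd (fun z => w z k) j y) j x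
      = ∑ k, (w x k * pd (pd (fun z => w z k) j) j x + (pd (fun z => w z k) j x)^2) := by
    intro j
    rw [pd_sum _ _ (fun k _ => (diffAt hs (contDiffOn_proj hw k) hx).fun_mul
        (diffAt hs (contDiffOn_pd hs (contDiffOn_proj hw k) j) hx))]
    refine Finset.sum_congr rfl fun k _ => ?_
    rw [pd_mul (diffAt hs (contDiffOn_proj hw k) hx)
        (diffAt hs (contDiffOn_pd hs (contDiffOn_proj hw k) j) hx)]
    ring
  rw [Finset.sum_congr rfl fun j _ => (hcong j).trans (hterm j)]
  simp only [Finset.sum_add_distrib]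
  rw [add_comm]
  congr 1
  rw [Finset.sum_comm]
  exact Finset.sum_congr rfl fun k _ => (Finset.mul_sum _ _ _).symm

lemma pd_gradSq {s : Set (E n)} (hs : IsOpen s) {d : E n → E n}
    (hd : ContDiffOn ℝ (⊤ : ℕ∞) d s) (hx : x ∈ s) (i : Fin n) :
    pd (fun y => gradSq d y / 2) i x
      = ∑ j, ∑ k, pd (fun z => d z k) j x * pd (pd (fun z => d z k) j) i x := by
  have h1 : (fun y => gradSq d y / 2)
      = fun y => ∑ j, ∑ k, (pd (fun z => d z k) j y)^2/2 := by
    funext y; simp [gradSq, Finset.sum_div]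
  have hdk : ∀ (j k : Fin n), DifferentiableAt ℝ (fun y => (pd (fun z => d z k) j y)^2/2) x :=
    fun j k => diff_sq_div_two (diffAt hs (contDiffOn_pd hs (contDiffOn_proj hd k) j) hx)
  rw [h1]
  rw [pd_sum _ _ (fun j _ => DifferentiableAt.fun_sum fun k _ => hdk j k)]
  refine Finset.sum_congr rfl fun j _ => ?_
  rw [pd_sum _ _ (fun k _ => hdk j k)]
  exact Finset.sum_congr rfl fun k _ =>
    pd_sq_div_two (diffAt hs (contDiffOn_pd hs (contDiffOn_proj hd k) j) hx)

lemma tensor_expand {s : Set (E n)} (hs : IsOpen s) {d : E n → E n}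
    (hd : ContDiffOn ℝ (⊤ : ℕ∞) d s) (hx : x ∈ s) (i : Fin n) :
    ∑ j, pd (fun y => ∑ k, pd (fun z => d z k) i y * pd (fun z => d z k) j y) j x
      = (∑ j, ∑ k, pd (fun z => d z k) j x * pd (pd (fun z => d z k) j) i x)
        + ∑ k, pd (fun z => d z k) i x * lap (fun z => d z k) x := by
  have hterm : ∀ j : Fin n,
      pd (fun y => ∑ k, pd (fun z => d z k) i y * pd (fun z => d z k) j y) j x
      = ∑ k, (pd (fun z => d z k) j x * pd (pd (fun z => d z k) j) i x
          + pd (fun z => d z k) i x * pd (pd (fun z => d z k) j) j x) := by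
    intro j
    rw [pd_sum _ _ (fun k _ =>
        (diffAt hs (contDiffOn_pd hs (contDiffOn_proj hd k) i) hx).fun_mul
        (diffAt hs (contDiffOn_pd hs (contDiffOn_proj hd k) j) hx))]
    refine Finset.sum_congr rfl fun k _ => ?_
    rw [pd_mul (diffAt hs (contDiffOn_pd hs (contDiffOn_proj hd k) i) hx)
        (diffAt hs (contDiffOn_pd hs (contDiffOn_proj hd k) j) hx)]
    rw [pd_pd_symm (i := i) (j := j) hs (contDiffOn_proj hd k) hx]
    ring
  rw [Finset.sum_congr rfl fun j _ => hterm j]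
  simp only [Finset.sum_add_distrib]
  congr 1
  rw [Finset.sum_comm]
  exact Finset.sum_congr rfl fun k _ => (Finset.mul_sum _ _ _).symm

lemma sphere_orth {d : E n → E n} (hd : ContDiffOn ℝ (⊤ : ℕ∞) d {(0 : E n)}ᶜ)
    (hsph : ∀ y : E n, y ≠ 0 → ‖d y‖ = 1) (hx : x ≠ 0) (i : Fin n) :
    ∑ k, d x k * pd (fun z => d z k) i x = 0 := by
  have hs : IsOpen ({(0 : E n)}ᶜ) := isOpen_compl_singleton
  have hxs : x ∈ ({(0 : E n)}ᶜ) := Set.mem_compl_singleton_iff.mpr hx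
  have h0 : pd (fun y => ‖d y‖^2/2) i x = 0 := by
    have hEq : (fun y : E n => ‖d y‖^2/2) =ᶠ[nhds x] (fun _ => (1:ℝ)/2) := by
      filter_upwards [hs.mem_nhds hxs] with y hy
      have : ‖d y‖ = 1 := hsph y hy
      rw [this]; norm_num
    rw [pd_congr hEq]
    unfold pd; simp
  rw [← pd_normSq hs hd hxs i]
  exact h0

lemma alg_rhs {ι : Type*} [Fintype ι] (U P Lu L : ι → ℝ) (A B : ι → ι → ℝ)
    (CC : ι → ι → ι → ℝ) (G2 : ℝ)
    (hLu : ∀ k, Lu k = (∑ j, U j * A j k) + P k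
        + ((∑ j, ∑ r, B j r * CC k j r) + ∑ r, B k r * L r)) :
    (G2 + ∑ k, U k * Lu k)
      - ∑ i, U i * ((∑ j, ∑ r, B j r * CC i j r) + (∑ k, U k * A i k) + P i)
    = G2 + ∑ r, L r * ∑ k, U k * B k r := by
  have h1 : ∑ k, U k * (∑ j, U j * A j k) = ∑ i, U i * (∑ k, U k * A i k) := by
    simp only [Finset.mul_sum]
    rw [Finset.sum_comm]
    exact Finset.sum_congr rfl fun _ _ => Finset.sum_congr rfl fun _ _ => by ring
  have h2 : ∑ k, U k * (∑ r, B k r * L r) = ∑ r, L r * ∑ k, U k * B k r := by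
    simp only [Finset.mul_sum]
    rw [Finset.sum_comm]
    exact Finset.sum_congr rfl fun _ _ => Finset.sum_congr rfl fun _ _ => by ring
  simp only [hLu, mul_add, Finset.sum_add_distrib]
  linarith [h1, h2]

lemma alg_lhs {ι : Type*} [Fintype ι] (L D U : ι → ℝ) (Bv : ι → ι → ℝ) (G : ℝ)
    (hV : ∀ k, L k + G * D k = ∑ i, U i * Bv i k)
    (horth : ∀ i, ∑ k, D k * Bv i k = 0) :
    ∑ k, (L k + G * D k)^2 = ∑ r, L r * ∑ k, U k * Bv k r := by
  have h1 : ∀ k, (L k + G * D k)^2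
      = (∑ i, U i * Bv i k) * L k + G * (D k * (∑ i, U i * Bv i k)) := by
    intro k; rw [← hV k]; ring
  have h2 : ∑ k, D k * (∑ i, U i * Bv i k) = 0 := by
    have h3 : ∑ k, D k * (∑ i, U i * Bv i k) = ∑ i, U i * (∑ k, D k * Bv i k) := by
      simp only [Finset.mul_sum]
      rw [Finset.sum_comm]
      exact Finset.sum_congr rfl fun _ _ => Finset.sum_congr rfl fun _ _ => by ring
    rw [h3]
    simp [horth]
  simp only [h1]
  rw [Finset.sum_add_distrib, ← Finset.mul_sum, h2, mul_zero, add_zero]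
  exact Finset.sum_congr rfl fun k _ => by ring

end helpers

/-- The steady simplified Ericksen–Leslie system on `ℝⁿ \ {0}`:
`-Δu + (u·∇)u + ∇p = -div(∇d ⊙ ∇d)`, `div u = 0`, `Δd + |∇d|² d = (u·∇)d`. -/
def SEL {n : ℕ} (u : E n → E n) (p : E n → ℝ) (d : E n → E n) : Prop :=
  ∀ x : E n, x ≠ 0 →
    (∀ i, -(lap (fun y => u y i) x) + (∑ j, u x j * pd (fun y => u y i) j x) + pd p i x
        = -(∑ j, pd (fun y => ∑ k, pd (fun z => d z k) i y * pd (fun z => d z k) j y) j x))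
    ∧ (∑ i, pd (fun y => u y i) i x) = 0
    ∧ (∀ k, lap (fun y => d y k) x + gradSq d x * d x k
        = ∑ i, u x i * pd (fun y => d y k) i x)

/-- for a smooth solution `(u,p,d)` of the steady Ericksen–Leslie system
on `ℝⁿ \ {0}` with `d` valued in `S^{n-1}`, the pointwise identity
`|∇u|² + |Δd + |∇d|² d|² = Δ(|u|²/2) - u·∇(|∇d|²/2 + |u|²/2 + p)` holds. -/
theorem stmt13 (n : ℕ) (u : E n → E n) (p : E n → ℝ) (d : E n → E n)
    (husm : ContDiffOn ℝ (⊤ : ℕ∞) u {(0 : E n)}ᶜ)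
    (hpsm : ContDiffOn ℝ (⊤ : ℕ∞) p {(0 : E n)}ᶜ)
    (hdsm : ContDiffOn ℝ (⊤ : ℕ∞) d {(0 : E n)}ᶜ)
    (hsph : ∀ x : E n, x ≠ 0 → ‖d x‖ = 1)
    (hSEL : SEL u p d) :
    ∀ x : E n, x ≠ 0 →
      gradSq u x + ∑ k, (lap (fun y => d y k) x + gradSq d x * d x k) ^ 2
        = lap (fun y => ‖u y‖ ^ 2 / 2) x
          - ∑ i, u x i *
              pd (fun y => gradSq d y / 2 + ‖u y‖ ^ 2 / 2 + p y) i x := by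
  intro x hx
  have hs : IsOpen ({(0 : E n)}ᶜ) := isOpen_compl_singleton
  have hxs : x ∈ ({(0 : E n)}ᶜ) := Set.mem_compl_singleton_iff.mpr hx
  obtain ⟨hEq1, hDiv, hEq3⟩ := hSEL x hx
  have hlap : lap (fun y => ‖u y‖ ^ 2 / 2) x
      = gradSq u x + ∑ k, u x k * lap (fun z => u z k) x := lap_normSq hs husm hxs
  have hgdiff : DifferentiableAt ℝ (fun y => gradSq d y / 2) x := by
    have h1 : (fun y : E n => gradSq d y / 2)
        = fun y => ∑ j, ∑ k, (pd (fun z => d z k) j y)^2/2 := by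
      funext y; simp [gradSq, Finset.sum_div]
    rw [h1]
    exact DifferentiableAt.fun_sum fun j _ => DifferentiableAt.fun_sum fun k _ =>
      diff_sq_div_two (diffAt hs (contDiffOn_pd hs (contDiffOn_proj hdsm k) j) hxs)
  have hudiff : DifferentiableAt ℝ (fun y : E n => ‖u y‖ ^ 2 / 2) x := by
    rw [normSq_fun]
    exact DifferentiableAt.fun_sum fun k _ =>
      diff_sq_div_two (diffAt hs (contDiffOn_proj husm k) hxs)
  have hpdiff : DifferentiableAt ℝ p x := diffAt hs hpsm hxs
  have hpdfull : ∀ i, pd (fun y => gradSq d y / 2 + ‖u y‖ ^ 2 / 2 + p y) i x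
      = (∑ j, ∑ r, pd (fun z => d z r) j x * pd (pd (fun z => d z r) j) i x)
        + (∑ k, u x k * pd (fun z => u z k) i x) + pd p i x := by
    intro i
    rw [pd_add (hgdiff.fun_add hudiff) hpdiff, pd_add hgdiff hudiff,
        pd_gradSq hs hdsm hxs i, pd_normSq hs husm hxs i]
  have hLu : ∀ k, lap (fun z => u z k) x
      = (∑ j, u x j * pd (fun z => u z k) j x) + pd p k x
        + ((∑ j, ∑ r, pd (fun z => d z r) j x * pd (pd (fun z => d z r) j) k x)
          + ∑ r, pd (fun z => d z r) k x * lap (fun z => d z r) x) := by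
    intro k
    have h1 := hEq1 k
    have h2 := tensor_expand hs hdsm hxs k
    linarith [h1, h2]
  have hRHS : lap (fun y => ‖u y‖ ^ 2 / 2) x
      - ∑ i, u x i * pd (fun y => gradSq d y / 2 + ‖u y‖ ^ 2 / 2 + p y) i x
      = gradSq u x
        + ∑ r, lap (fun z => d z r) x * ∑ k, u x k * pd (fun z => d z r) k x := by
    rw [hlap]
    simp only [hpdfull]
    exact alg_rhs (fun i => u x i) (fun i => pd p i x) (fun k => lap (fun z => u z k) x)
      (fun r => lap (fun z => d z r) x) (fun j k => pd (fun z => u z k) j x)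
      (fun j r => pd (fun z => d z r) j x) (fun i j r => pd (pd (fun z => d z r) j) i x)
      (gradSq u x) hLu
  have hLHS : ∑ k, (lap (fun y => d y k) x + gradSq d x * d x k) ^ 2
      = ∑ r, lap (fun z => d z r) x * ∑ k, u x k * pd (fun z => d z r) k x :=
    alg_lhs (fun k => lap (fun y => d y k) x) (fun k => d x k) (fun i => u x i)
      (fun i k => pd (fun z => d z k) i x) (gradSq d x) hEq3
      (fun i => sphere_orth hdsm hsph hx i)
  rw [hRHS, hLHS]
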